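/- Let q be a positive integer and set κ_q = ζ₀/(2πq), where ζ₀ is the unique root in (0, π) of φ(ζ) = 1 with φ(ζ) = (sinζ/ζ)(2−cosζ). If ℓ is a positive integer with ℓ ≥ 2q and κ ∈ (0, κ_q], then χ₁(κ; ℓ, q) < χ₁(κ; q, q). -/

import Mathlib

/-!
Put `z = 2πqκ` and `a = (ℓ - q)/q ≥ 1`. Then `2πq (χ₁(κ;q,q) - χ₁(κ;ℓ,q))` equals
`g(z) = z + sin 2z / 2 - sin(az)/a - sin((a+2)z)/(a+2)`, and `κ ≤ κ_q` gives `0 < z < π`.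
Since `1 + cos 2t = 2 cos² t` and `cos at + cos (a+2)t = 2 cos t cos (a+1)t`,
`g'(t) = 2 cos t (cos t - cos (a+1)t)`, which is positive for `0 < t < π/(a+1)`; so `g > 0`
there. For larger `z` the oscillating terms are small, `sin((a+2)z)/(a+2) < 1/(a+1) < z/π`,
and Jordan-type lower bounds for `sin 2z` show that `z + sin 2z / 2` wins.
-/

open MeasureTheory Real Set Filter
open scoped ENNReal

noncomputable section

/-- The quantity `χ₁(κ; ℓ, q)`. -/
def chi1 (κ : ℝ) (l q : ℕ) : ℝ :=
  if l = q then
    κ + Real.sin (4 * π * q * κ) / (4 * π * q) - Real.sin (2 * π * q * κ) / (π * q)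
  else
    Real.sin (2 * π * ((l:ℝ) - q) * κ) / (2 * π * ((l:ℝ) - q))
      + Real.sin (2 * π * ((l:ℝ) + q) * κ) / (2 * π * ((l:ℝ) + q))
      - Real.sin (2 * π * q * κ) / (π * q)

def chi1Gap (a z : ℝ) : ℝ :=
  z + sin (2 * z) / 2 - sin (a * z) / a - sin ((a + 2) * z) / (a + 2)

lemma chi1_sub_chi1_eq_chi1Gap (κ : ℝ) {l q : ℕ} (hq : q ≠ 0) (hlq : l ≠ q) :
    chi1 κ q q - chi1 κ l q = chi1Gap (((l : ℝ) - q) / q) (2 * π * q * κ) / (2 * π * q) := by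
  have hq' : (q : ℝ) ≠ 0 := Nat.cast_ne_zero.mpr hq
  have hlq' : (l : ℝ) - q ≠ 0 := sub_ne_zero.mpr (Nat.cast_injective.ne hlq)
  have hl : (l : ℝ) + q ≠ 0 := by positivity
  have hsub : ((l : ℝ) - q) / q * (2 * π * q * κ) = 2 * π * ((l : ℝ) - q) * κ := by
    field_simp
  have hadd : (((l : ℝ) - q) / q + 2) * (2 * π * q * κ) = 2 * π * ((l : ℝ) + q) * κ := by
    field_simp; ring
  have hadd' : ((l : ℝ) - q) / q + 2 = ((l : ℝ) + q) / q := by field_simp; ring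
  rw [chi1Gap, hsub, hadd, hadd', chi1, chi1, if_pos rfl, if_neg hlq,
    show 2 * (2 * π * q * κ) = 4 * π * q * κ by ring]
  field_simp
  ring

lemma hasDerivAt_sin_mul_div {c : ℝ} (hc : c ≠ 0) (t : ℝ) :
    HasDerivAt (fun t => sin (c * t) / c) (cos (c * t)) t := by
  have h := ((hasDerivAt_id t).const_mul c).sin.div_const c
  simpa [mul_div_cancel_right₀ _ hc] using h

lemma hasDerivAt_chi1Gap {a : ℝ} (ha : 0 < a) (t : ℝ) :
    HasDerivAt (chi1Gap a) (2 * cos t * (cos t - cos ((a + 1) * t))) t := by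
  have h : HasDerivAt (chi1Gap a) (1 + cos (2 * t) - cos (a * t) - cos ((a + 2) * t)) t :=
    (((hasDerivAt_id' t).add (hasDerivAt_sin_mul_div two_ne_zero t)).sub
      (hasDerivAt_sin_mul_div ha.ne' t)).sub
      (hasDerivAt_sin_mul_div (c := a + 2) (by positivity) t)
  have hsum := cos_add_cos (a * t) ((a + 2) * t)
  rw [show (a * t + (a + 2) * t) / 2 = (a + 1) * t by ring,
    show (a * t - (a + 2) * t) / 2 = -t by ring, cos_neg] at hsum
  exact h.congr_deriv (by rw [cos_two_mul]; linarith)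

lemma chi1Gap_pos_of_mul_le_pi {a z : ℝ} (ha : 1 ≤ a) (hz : 0 < z)
    (hz' : (a + 1) * z ≤ π) : 0 < chi1Gap a z := by
  have ha1 : 0 < a + 1 := by linarith
  have hmono : StrictMonoOn (chi1Gap a) (Icc 0 (π / (a + 1))) := by
    refine strictMonoOn_of_deriv_pos (convex_Icc _ _)
      (fun t _ => (hasDerivAt_chi1Gap (by linarith) t).continuousAt.continuousWithinAt) ?_
    intro t ht
    rw [interior_Icc] at ht
    obtain ⟨ht0, htπ⟩ := ht
    have hat : (a + 1) * t < π := (lt_div_iff₀' ha1).mp htπ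
    have hcos : 0 < cos t := cos_pos_of_mem_Ioo ⟨by linarith [pi_pos], by nlinarith⟩
    have hcos_lt : cos ((a + 1) * t) < cos t :=
      cos_lt_cos_of_nonneg_of_le_pi ht0.le hat.le (by nlinarith)
    rw [(hasDerivAt_chi1Gap (by linarith) t).deriv]
    have := sub_pos.mpr hcos_lt
    positivity
  have h0 : chi1Gap a 0 = 0 := by simp [chi1Gap]
  rw [← h0]
  exact hmono ⟨le_rfl, by positivity⟩ ⟨hz.le, (le_div_iff₀' ha1).mpr hz'⟩ hz

lemma chi1Gap_pos_of_pi_lt_mul {a z : ℝ} (ha : 1 ≤ a) (hz : 0 < z) (hzπ : z < π)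
    (hz' : π < (a + 1) * z) : 0 < chi1Gap a z := by
  have hπ3 := pi_gt_three
  have ha0 : 0 < a := by linarith
  have hsmall : sin ((a + 2) * z) / (a + 2) < z / π := calc
    sin ((a + 2) * z) / (a + 2) ≤ 1 / (a + 2) := by gcongr; exact sin_le_one _
    _ < 1 / (a + 1) := by gcongr; linarith
    _ < z / π := by rw [div_lt_div_iff₀ (by linarith) pi_pos]; linarith
  have hthird : sin ((a + 2) * z) / (a + 2) ≤ 1 / 3 := by
    rw [div_le_div_iff₀ (by linarith) (by norm_num)]
    nlinarith [sin_le_one ((a + 2) * z)]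
  have hle_one : sin (a * z) / a ≤ 1 := by
    rw [div_le_one ha0]; linarith [sin_le_one (a * z)]
  have hle_z : sin (a * z) / a ≤ z := by
    rw [div_le_iff₀ ha0]; linarith [sin_le (by positivity : 0 ≤ a * z)]
  have hthree : 3 * (z / π) < z := by
    have := mul_lt_mul_of_pos_right hπ3 (div_pos hz pi_pos)
    rwa [mul_div_cancel₀ z pi_pos.ne'] at this
  unfold chi1Gap
  rcases le_or_gt z (π / 4) with hz4 | hz4
  · have hjordan : 2 / π * (2 * z) ≤ sin (2 * z) := mul_le_sin (by linarith) (by linarith)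
    have : 2 / π * (2 * z) = 4 * (z / π) := by ring
    linarith [div_pos hz pi_pos]
  rcases le_or_gt z (π / 2) with hz2 | hz2
  · have hjordan : 2 / π * (π - 2 * z) ≤ sin (2 * z) := by
      rw [← sin_pi_sub]; exact mul_le_sin (by linarith) (by linarith)
    have : 2 / π * (π - 2 * z) = 2 - 4 * (z / π) := by field_simp; ring
    linarith
  · have hreflect : π - 2 * z ≤ sin (2 * z) := by
      have := sin_le (show 0 ≤ 2 * z - π by linarith)
      rw [sin_sub_pi] at this
      linarith
    linarith

lemma chi1Gap_pos {a z : ℝ} (ha : 1 ≤ a) (hz : 0 < z) (hzπ : z < π) : 0 < chi1Gap a z := by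
  rcases le_or_gt ((a + 1) * z) π with h | h
  · exact chi1Gap_pos_of_mul_le_pi ha hz h
  · exact chi1Gap_pos_of_pi_lt_mul ha hz hzπ h

theorem stmt16_general (q l : ℕ) (hq : 0 < q) (hl : 2 * q ≤ l) (ζ₀ : ℝ)
    (hζ₀ : ζ₀ ∈ Set.Ioo 0 π)
    (κ : ℝ) (hκ : κ ∈ Set.Ioc (0:ℝ) (ζ₀ / (2 * π * q))) :
    chi1 κ l q < chi1 κ q q := by
  have hq0 : (0 : ℝ) < q := Nat.cast_pos.mpr hq
  have hscale : 0 < 2 * π * q := by positivity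
  have hz : 0 < 2 * π * q * κ := mul_pos hscale hκ.1
  have hzπ : 2 * π * q * κ < π := by
    have := (le_div_iff₀' hscale).mp hκ.2
    linarith [hζ₀.2]
  have ha : 1 ≤ ((l : ℝ) - q) / q := by
    rw [le_div_iff₀ hq0]
    have : (2 * q : ℝ) ≤ l := by exact_mod_cast hl
    linarith
  rw [← sub_pos, chi1_sub_chi1_eq_chi1Gap κ hq.ne' (by omega)]
  exact div_pos (chi1Gap_pos ha hz hzπ) hscale

/-- If `ℓ ≥ 2q` and `κ ∈ (0, κ_q]` with `κ_q = ζ₀/(2πq)`, where `ζ₀` is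
the unique root in `(0, π)` of `(sin ζ/ζ)(2 − cos ζ) = 1`, then `χ₁(κ;ℓ,q) < χ₁(κ;q,q)`. -/
theorem stmt16 (q l : ℕ) (hq : 0 < q) (hl : 2 * q ≤ l) (ζ₀ : ℝ)
    (hζ₀ : ζ₀ ∈ Set.Ioo 0 π) (hroot : (Real.sin ζ₀ / ζ₀) * (2 - Real.cos ζ₀) = 1)
    (κ : ℝ) (hκ : κ ∈ Set.Ioc (0:ℝ) (ζ₀ / (2 * π * q))) :
    chi1 κ l q < chi1 κ q q :=
  stmt16_general q l hq hl ζ₀ hζ₀ κ hκ
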